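/- Let (Σ,M) be an OP alphabet and K a commutative semiring. If S,T:(Σ,M)^+→K are regular (respectively strictly regular) series, then their pointwise (Hadamard) product S⊙T, defined by (S⊙T)(w)=S(w)·T(w), is regular (respectively strictly regular). -/

import Mathlib

namespace WOP

/-- Precedence relations: yields precedence, equal in precedence, takes precedence. -/
inductive PrecRel where
  | lt | eq | gt
deriving DecidableEq

/-- An operator precedence matrix on `Σ ∪ {#}`, where `none` encodes `#`.
It assigns at most one precedence relation to each ordered pair, with
`# ⋖ a` and `a ⋗ #` for every letter `a`. -/
structure OPM (A : Type) where
  rel : Option A → Option A → Option PrecRel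
  hash_lt : ∀ a : A, rel none (some a) = some .lt
  hash_gt : ∀ a : A, rel (some a) none = some .gt

variable {A B K : Type}

/-- The letter of `#w#` at position `i` (positions `0` and `> |w|` carry `#`, i.e. `none`). -/
def letterAt (w : List A) (i : ℕ) : Option A :=
  if i = 0 then none else w[i - 1]?

section ChainRel

variable (M : OPM A) (L : ℕ → Option A)

mutual
  /-- `ChainMid M L k j`: there are `k = k_s < ... < k_m = j` with
  `L k_s ≐ L k_{s+1} ≐ ... ≐ L k_{m-1} ⋗ L k_m` and the gap condition between
  consecutive elements. -/
  inductive ChainMid : ℕ → ℕ → Prop where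
    | last {k j : ℕ} : M.rel (L k) (L j) = some .gt → ChainGap k j → ChainMid k j
    | step {k k' j : ℕ} : M.rel (L k) (L k') = some .eq → ChainGap k k' →
        ChainMid k' j → ChainMid k j

  /-- The gap condition between consecutive elements of a chain:
  adjacent positions or a chain. -/
  inductive ChainGap : ℕ → ℕ → Prop where
    | adj (k : ℕ) : ChainGap k (k + 1)
    | chain {k k' : ℕ} : Chain k k' → ChainGap k k'

  /-- The chain relation `i ⤳ j`: there are positions `i = k_1 < ... < k_m = j` with
  `L k_1 ⋖ L k_2 ≐ ... ≐ L k_{m-1} ⋗ L k_m` such that consecutive `k`'s are adjacent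
  or themselves related by `⤳`. -/
  inductive Chain : ℕ → ℕ → Prop where
    | mk {i k j : ℕ} : M.rel (L i) (L k) = some .lt → ChainGap i k → ChainMid k j →
        Chain i j
end

end ChainRel

/-- `(Σ,M)^+`: the set of nonempty words compatible with `M`, i.e. `0 ⤳ |w|+1` in `#w#`. -/
def OPWords (M : OPM A) : Set (List A) :=
  {w | w ≠ [] ∧ Chain M (letterAt w) 0 (w.length + 1)}

/-- An (unweighted) operator precedence automaton over the alphabet `A`. -/
structure OPA (A : Type) where
  Q : Type
  fin : Fintype Q
  I : Set Q
  F : Set Q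
  δpush : Set (Q × A × Q)
  δshift : Set (Q × A × Q)
  δpop : Set (Q × Q × Q)

/-- A weighted operator precedence automaton over the alphabet `A` and weights in `K`. -/
structure WOPA (A K : Type) extends OPA A where
  wtpush : Q × A × Q → K
  wtshift : Q × A × Q → K
  wtpop : Q × Q × Q → K

/-- A configuration: a stack of (symbol, state) pairs, a current state,
and the remaining input. -/
structure Config (A Q : Type) where
  stack : List (A × Q)
  state : Q
  input : List A

/-- The moves (transitions) an OPA may take. -/
inductive Move (A Q : Type) where
  | push (q : Q) (b : A) (r : Q)
  | shift (q : Q) (b : A) (r : Q)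
  | pop (q p r : Q)

/-- The topmost stack symbol (`none` = `#` for the empty stack). -/
def topSym {Q : Type} (st : List (A × Q)) : Option A := st.head?.map Prod.fst

/-- One step of an OPA on an OP alphabet `(A, M)`. -/
inductive Exec (M : OPM A) (T : OPA A) : Config A T.Q → Move A T.Q → Config A T.Q → Prop where
  | push {st : List (A × T.Q)} {q r : T.Q} {b : A} {x : List A} :
      M.rel (topSym st) (some b) = some .lt → (q, b, r) ∈ T.δpush →
      Exec M T ⟨st, q, b :: x⟩ (.push q b r) ⟨(b, q) :: st, r, x⟩
  | shift {st : List (A × T.Q)} {p q r : T.Q} {a b : A} {x : List A} :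
      M.rel (some a) (some b) = some .eq → (q, b, r) ∈ T.δshift →
      Exec M T ⟨(a, p) :: st, q, b :: x⟩ (.shift q b r) ⟨(b, p) :: st, r, x⟩
  | pop {st : List (A × T.Q)} {p q r : T.Q} {a : A} {x : List A} :
      M.rel (some a) x.head? = some .gt → (q, p, r) ∈ T.δpop →
      Exec M T ⟨(a, p) :: st, q, x⟩ (.pop q p r) ⟨st, r, x⟩

/-- Execution of a sequence of moves. -/
inductive ExecList (M : OPM A) (T : OPA A) :
    Config A T.Q → List (Move A T.Q) → Config A T.Q → Prop where
  | nil (c : Config A T.Q) : ExecList M T c [] c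
  | cons {c c' c'' : Config A T.Q} {m : Move A T.Q} {ms : List (Move A T.Q)} :
      Exec M T c m c' → ExecList M T c' ms c'' → ExecList M T c (m :: ms) c''

/-- The weight of a move of a weighted OPA. -/
def moveWt [Semiring K] (W : WOPA A K) : Move A W.Q → K
  | .push q b r => W.wtpush (q, b, r)
  | .shift q b r => W.wtshift (q, b, r)
  | .pop q p r => W.wtpop (q, p, r)

/-- The accepting runs of an OPA on `w`: an initial state, a sequence of moves from the
initial configuration (empty stack, whole input) to a final configuration
(empty stack, input read), and the final state reached. -/
def AccRuns (M : OPM A) (T : OPA A) (w : List A) : Set (T.Q × List (Move A T.Q) × T.Q) :=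
  {ρ | ρ.1 ∈ T.I ∧ ρ.2.2 ∈ T.F ∧ ExecList M T ⟨[], ρ.1, w⟩ ρ.2.1 ⟨[], ρ.2.2, []⟩}

/-- The behavior `⟦W⟧(w)`: the sum over all accepting runs of `W` on `w` of the product
(in order) of the weights of the moves of the run. -/
noncomputable def behavior [Semiring K] (M : OPM A) (W : WOPA A K) (w : List A) : K :=
  ∑ᶠ ρ ∈ AccRuns M W.toOPA w, (ρ.2.1.map (moveWt W)).prod

/-- A weighted OPA is restricted (an rwOPA) if all pop weights are `1`. -/
def Restricted [Semiring K] (W : WOPA A K) : Prop := ∀ t ∈ W.δpop, W.wtpop t = 1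

/-- A series `S : (Σ,M)^+ → K` is regular if it is the behavior of some wOPA. -/
def Regular [Semiring K] (M : OPM A) (S : List A → K) : Prop :=
  ∃ W : WOPA A K, ∀ w ∈ OPWords M, S w = behavior M W w

/-- A series is strictly regular if it is the behavior of some restricted wOPA. -/
def StrictlyRegular [Semiring K] (M : OPM A) (S : List A → K) : Prop :=
  ∃ W : WOPA A K, Restricted W ∧ ∀ w ∈ OPWords M, S w = behavior M W w

/-- Unweighted acceptance. -/
def Accepts (M : OPM A) (T : OPA A) (w : List A) : Prop :=
  ∃ qI ms qF, qI ∈ T.I ∧ qF ∈ T.F ∧ ExecList M T ⟨[], qI, w⟩ ms ⟨[], qF, []⟩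

/-- A language `L ⊆ (Σ,M)^+` is an operator precedence language if it is the set of
compatible words accepted by some OPA. -/
def IsOPL (M : OPM A) (L : Set (List A)) : Prop :=
  ∃ T : OPA A, L = {w | w ∈ OPWords M ∧ Accepts M T w}

/-- The intersection `S ∩ L` of a series with a language. -/
noncomputable def interSeries [Semiring K] (S : List A → K) (L : Set (List A))
    (w : List A) : K :=
  open Classical in if w ∈ L then S w else 0

/-- `h : Σ → Γ` is OPM-preserving: `a ⊙ b` iff `h(a) ⊙ h(b)` for every relation `⊙`. -/
def OPMPreserving (M : OPM A) (M' : OPM B) (h : A → B) : Prop :=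
  ∀ a b : A, M.rel (some a) (some b) = M'.rel (some (h a)) (some (h b))

/-- The image series `h(S)(v) = ∑_{w ∈ (Σ,M)^+, h(w) = v} S(w)`. -/
noncomputable def mapSeries [Semiring K] (M : OPM A) (h : A → B) (S : List A → K)
    (v : List B) : K :=
  ∑ᶠ w ∈ {w | w ∈ OPWords M ∧ w.map h = v}, S w

/-- The pullback OPM `h⁻¹(M)` along `h : Σ' → Σ`. -/
def pullOPM (M : OPM A) (h : B → A) : OPM B where
  rel o₁ o₂ := M.rel (o₁.map h) (o₂.map h)
  hash_lt b := M.hash_lt (h b)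
  hash_gt b := M.hash_gt (h b)

/-- The Nivat class `N(Σ,M,K)`: series obtained from a one-state restricted wOPA over a
pulled-back OP alphabet, intersected with an OPL, followed by the projection. -/
def NivatClass [Semiring K] (M : OPM A) (S : List A → K) : Prop :=
  ∃ (B : Type) (_ : Fintype B) (h : B → A) (W : WOPA B K) (L : Set (List B)),
    Restricted W ∧ (∃ q₀ : W.Q, ∀ q : W.Q, q = q₀) ∧ IsOPL (pullOPM M h) L ∧
    ∀ v ∈ OPWords M,
      S v = mapSeries (pullOPM M h) h (interSeries (behavior (pullOPM M h) W) L) v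

/-- An OPL step function: a finite sum `∑ kᵢ · 1_{Lᵢ}` with the `Lᵢ` OPLs forming a
partition of `(Σ,M)^+`. -/
def IsOPLStep [Semiring K] (M : OPM A) (S : List A → K) : Prop :=
  ∃ (n : ℕ) (k : Fin n → K) (L : Fin n → Set (List A)),
    (∀ i, IsOPL M (L i)) ∧ (∀ i j, i ≠ j → Disjoint (L i) (L j)) ∧
    (⋃ i, L i) = OPWords M ∧ ∀ i, ∀ w ∈ L i, S w = k i

/-!
Run the two automata in lockstep: the product automaton has pairs of states, and its stack
carries the common letters together with pairs of states. Whether a move is a push, a shift or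
a pop is dictated by the precedence of the stack top over the lookahead, so two runs on the same
word take moves of the same kind at every step and zip into a run of the product. Hence the
accepting runs of the product are in bijection with pairs of accepting runs; as run weights
multiply componentwise and `K` is commutative, the behavior of the product is the product of
the behaviors. Pop weights multiply too, so the product of restricted automata is restricted.
-/

theorem finsum_mem_prod_mul_prod {α β R : Type*} [NonUnitalNonAssocSemiring R]
    {s : Set α} {t : Set β} (hs : s.Finite) (ht : t.Finite) (f : α → R) (g : β → R) :
    ∑ᶠ p ∈ s ×ˢ t, f p.1 * g p.2 = (∑ᶠ a ∈ s, f a) * ∑ᶠ b ∈ t, g b := by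
  classical
  rw [← hs.coe_toFinset, ← ht.coe_toFinset, ← Finset.coe_product, finsum_mem_coe_finset,
    finsum_mem_coe_finset, finsum_mem_coe_finset, Finset.sum_mul_sum, Finset.sum_product]

namespace Move

variable {Q Q' : Type}

def map (f : Q → Q') : Move A Q → Move A Q'
  | push q b r => push (f q) b (f r)
  | shift q b r => shift (f q) b (f r)
  | pop q p r => pop (f q) (f p) (f r)

def prec : Move A Q → PrecRel
  | push .. => .lt
  | shift .. => .eq
  | pop .. => .gt

lemma map_fst_snd_injective {Q₁ Q₂ : Type} :
    Function.Injective fun m : Move A (Q₁ × Q₂) => (m.map Prod.fst, m.map Prod.snd) := by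
  intro m m' h
  cases m <;> cases m' <;> simp_all [map, Prod.ext_iff]

instance [Finite A] [Finite Q] : Finite (Move A Q) :=
  Finite.of_surjective
    (fun x : (Q × A × Q) ⊕ (Q × A × Q) ⊕ (Q × Q × Q) => match x with
      | .inl (q, b, r) => push q b r
      | .inr (.inl (q, b, r)) => shift q b r
      | .inr (.inr (q, p, r)) => pop q p r)
    (by rintro (⟨q, b, r⟩ | ⟨q, b, r⟩ | ⟨q, p, r⟩)
        exacts [⟨.inl (q, b, r), rfl⟩, ⟨.inr (.inl (q, b, r)), rfl⟩, ⟨.inr (.inr (q, p, r)), rfl⟩])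

end Move

def Config.map {Q Q' : Type} (f : Q → Q') (c : Config A Q) : Config A Q' :=
  ⟨c.stack.map (Prod.map id f), f c.state, c.input⟩

lemma topSym_map {Q Q' : Type} (f : Q → Q') (st : List (A × Q)) :
    topSym (st.map (Prod.map id f)) = topSym st := by
  cases st <;> rfl

structure OPA.Hom (T T' : OPA A) where
  toFun : T.Q → T'.Q
  map_push : ∀ q b r, (q, b, r) ∈ T.δpush → (toFun q, b, toFun r) ∈ T'.δpush
  map_shift : ∀ q b r, (q, b, r) ∈ T.δshift → (toFun q, b, toFun r) ∈ T'.δshift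
  map_pop : ∀ q p r, (q, p, r) ∈ T.δpop → (toFun q, toFun p, toFun r) ∈ T'.δpop

@[reducible]
def OPA.prod (T₁ T₂ : OPA A) : OPA A where
  Q := T₁.Q × T₂.Q
  fin := @instFintypeProd _ _ T₁.fin T₂.fin
  I := T₁.I ×ˢ T₂.I
  F := T₁.F ×ˢ T₂.F
  δpush := {t | (t.1.1, t.2.1, t.2.2.1) ∈ T₁.δpush ∧ (t.1.2, t.2.1, t.2.2.2) ∈ T₂.δpush}
  δshift := {t | (t.1.1, t.2.1, t.2.2.1) ∈ T₁.δshift ∧ (t.1.2, t.2.1, t.2.2.2) ∈ T₂.δshift}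
  δpop := {t | (t.1.1, t.2.1.1, t.2.2.1) ∈ T₁.δpop ∧ (t.1.2, t.2.1.2, t.2.2.2) ∈ T₂.δpop}

def OPA.Hom.fst (T₁ T₂ : OPA A) : OPA.Hom (T₁.prod T₂) T₁ :=
  ⟨Prod.fst, fun _ _ _ h => h.1, fun _ _ _ h => h.1, fun _ _ _ h => h.1⟩

def OPA.Hom.snd (T₁ T₂ : OPA A) : OPA.Hom (T₁.prod T₂) T₂ :=
  ⟨Prod.snd, fun _ _ _ h => h.2, fun _ _ _ h => h.2, fun _ _ _ h => h.2⟩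

section Runs

variable {M : OPM A} {T T₁ T₂ : OPA A}

lemma Exec.rel_eq_prec {c c' : Config A T.Q} {m : Move A T.Q} (h : Exec M T c m c') :
    M.rel (topSym c.stack) c.input.head? = some m.prec := by
  cases h <;> assumption

lemma Exec.map {T' : OPA A} (f : OPA.Hom T T') {c c' : Config A T.Q} {m : Move A T.Q}
    (h : Exec M T c m c') : Exec M T' (c.map f.toFun) (m.map f.toFun) (c'.map f.toFun) := by
  cases h with
  | push hrel hmem => exact .push (by rwa [topSym_map]) (f.map_push _ _ _ hmem)
  | shift hrel hmem => exact .shift hrel (f.map_shift _ _ _ hmem)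
  | pop hrel hmem => exact .pop hrel (f.map_pop _ _ _ hmem)

lemma ExecList.map {T' : OPA A} (f : OPA.Hom T T') {c c' : Config A T.Q}
    {ms : List (Move A T.Q)} (h : ExecList M T c ms c') :
    ExecList M T' (c.map f.toFun) (ms.map (Move.map f.toFun)) (c'.map f.toFun) := by
  induction h with
  | nil => exact .nil _
  | cons h _ ih => exact .cons (h.map f) ih

lemma ExecList.length_add_le {c c' : Config A T.Q} {ms : List (Move A T.Q)}
    (h : ExecList M T c ms c') :
    ms.length + 2 * c'.input.length + c'.stack.length ≤ 2 * c.input.length + c.stack.length := by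
  induction h with
  | nil => simp
  | cons h _ ih => cases h <;> simp at ih ⊢ <;> omega

lemma accRuns_finite [Finite A] (T : OPA A) (w : List A) : (AccRuns M T w).Finite := by
  have := T.fin
  refine (Set.finite_univ.prod ((List.finite_length_le _ (2 * w.length)).prod
    Set.finite_univ)).subset ?_
  rintro ⟨qI, ms, qF⟩ ⟨-, -, h⟩
  have := h.length_add_le
  simp_all

lemma Exec.prod_of_fst_snd {c : Config A (T₁.prod T₂).Q} {m₁ : Move A T₁.Q}
    {m₂ : Move A T₂.Q} {c₁ : Config A T₁.Q} {c₂ : Config A T₂.Q}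
    (h₁ : Exec M T₁ (c.map Prod.fst) m₁ c₁) (h₂ : Exec M T₂ (c.map Prod.snd) m₂ c₂) :
    ∃ m c', Exec M (T₁.prod T₂) c m c' ∧ m.map Prod.fst = m₁ ∧ m.map Prod.snd = m₂ ∧
      c'.map Prod.fst = c₁ ∧ c'.map Prod.snd = c₂ := by
  -- the kind of a move is dictated by the precedence of the stack top over the lookahead,
  -- which the two projected configurations share
  have hprec : m₁.prec = m₂.prec := by
    have e₁ := h₁.rel_eq_prec
    have e₂ := h₂.rel_eq_prec
    simp only [Config.map, topSym_map] at e₁ e₂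
    exact Option.some.inj (e₁.symm.trans e₂)
  obtain ⟨_ | ⟨⟨a, p⟩, st⟩, q, w⟩ := c <;> cases h₁ <;> cases h₂ <;> cases hprec
  all_goals first
    | exact ⟨_, _, .push (r := (_, _)) ‹_› ⟨‹_›, ‹_›⟩, rfl, rfl, rfl, rfl⟩
    | exact ⟨_, _, .shift (r := (_, _)) ‹_› ⟨‹_›, ‹_›⟩, rfl, rfl, rfl, rfl⟩
    | exact ⟨_, _, .pop (r := (_, _)) ‹_› ⟨‹_›, ‹_›⟩, rfl, rfl, rfl, rfl⟩

lemma ExecList.eq_of_nil {c c' : Config A T.Q} (h : ExecList M T c [] c') :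
    c = c' := by
  cases h; rfl

lemma ExecList.eq_nil_of_terminal {q : T.Q} {ms : List (Move A T.Q)}
    {c : Config A T.Q} (h : ExecList M T ⟨[], q, []⟩ ms c) : ms = [] := by
  rcases h with _ | ⟨⟨⟩, _⟩
  rfl

lemma ExecList.prod_of_fst_snd {c : Config A (T₁.prod T₂).Q} {ms₁ : List (Move A T₁.Q)}
    {ms₂ : List (Move A T₂.Q)} {f₁ : T₁.Q} {f₂ : T₂.Q}
    (h₁ : ExecList M T₁ (c.map Prod.fst) ms₁ ⟨[], f₁, []⟩)
    (h₂ : ExecList M T₂ (c.map Prod.snd) ms₂ ⟨[], f₂, []⟩) :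
    ∃ ms, ExecList M (T₁.prod T₂) c ms ⟨[], (f₁, f₂), []⟩ ∧
      ms.map (Move.map Prod.fst) = ms₁ ∧ ms.map (Move.map Prod.snd) = ms₂ := by
  induction ms₁ generalizing c ms₂ with
  | nil =>
    obtain ⟨st, ⟨q₁, q₂⟩, w⟩ := c
    have hc := h₁.eq_of_nil
    simp only [Config.map, Config.mk.injEq, List.map_eq_nil_iff] at hc
    obtain ⟨rfl, rfl, rfl⟩ := hc
    obtain rfl := h₂.eq_nil_of_terminal
    obtain rfl : q₂ = f₂ := congrArg Config.state h₂.eq_of_nil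
    exact ⟨[], .nil _, rfl, rfl⟩
  | cons m₁ ms₁ ih =>
    cases ms₂ with
    | nil =>
      obtain ⟨st, q, w⟩ := c
      have hc := h₂.eq_of_nil
      simp only [Config.map, Config.mk.injEq, List.map_eq_nil_iff] at hc
      obtain ⟨rfl, -, rfl⟩ := hc
      cases h₁.eq_nil_of_terminal
    | cons m₂ ms₂ =>
      obtain _ | ⟨hx₁, hr₁⟩ := h₁
      obtain _ | ⟨hx₂, hr₂⟩ := h₂
      obtain ⟨m, c', hx, rfl, rfl, rfl, rfl⟩ := hx₁.prod_of_fst_snd hx₂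
      obtain ⟨ms, hms, rfl, rfl⟩ := ih hr₁ hr₂
      exact ⟨m :: ms, .cons hx hms, rfl, rfl⟩

lemma accRuns_prod_bijOn (T₁ T₂ : OPA A) (w : List A) :
    Set.BijOn (fun ρ : (T₁.Q × T₂.Q) × List (Move A (T₁.Q × T₂.Q)) × (T₁.Q × T₂.Q) =>
        ((ρ.1.1, ρ.2.1.map (Move.map Prod.fst), ρ.2.2.1),
        (ρ.1.2, ρ.2.1.map (Move.map Prod.snd), ρ.2.2.2)))
      (AccRuns M (T₁.prod T₂) w) (AccRuns M T₁ w ×ˢ AccRuns M T₂ w) := by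
  refine ⟨?_, ?_, ?_⟩
  · rintro ⟨qI, ms, qF⟩ ⟨hI, hF, h⟩
    exact ⟨⟨hI.1, hF.1, h.map (.fst _ _)⟩, ⟨hI.2, hF.2, h.map (.snd _ _)⟩⟩
  · rintro ⟨qI, ms, qF⟩ - ⟨qI', ms', qF'⟩ - h
    simp only [Prod.mk.injEq] at h
    obtain ⟨⟨hI₁, hms₁, hF₁⟩, ⟨hI₂, hms₂, hF₂⟩⟩ := h
    have hms : ms = ms' := by
      apply List.map_injective_iff.mpr Move.map_fst_snd_injective
      rw [← List.zip_map', ← List.zip_map', hms₁, hms₂]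
    rw [Prod.ext hI₁ hI₂, hms, Prod.ext hF₁ hF₂]
  · rintro ⟨⟨qI₁, ms₁, qF₁⟩, ⟨qI₂, ms₂, qF₂⟩⟩ ⟨⟨hI₁, hF₁, h₁⟩, ⟨hI₂, hF₂, h₂⟩⟩
    obtain ⟨ms, hms, rfl, rfl⟩ := ExecList.prod_of_fst_snd (c := ⟨[], (qI₁, qI₂), w⟩) h₁ h₂
    exact ⟨((qI₁, qI₂), ms, (qF₁, qF₂)), ⟨⟨hI₁, hI₂⟩, ⟨hF₁, hF₂⟩, hms⟩, rfl⟩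

end Runs

@[reducible]
def WOPA.prod [Mul K] (W₁ W₂ : WOPA A K) : WOPA A K where
  toOPA := W₁.toOPA.prod W₂.toOPA
  wtpush t := W₁.wtpush (t.1.1, t.2.1, t.2.2.1) * W₂.wtpush (t.1.2, t.2.1, t.2.2.2)
  wtshift t := W₁.wtshift (t.1.1, t.2.1, t.2.2.1) * W₂.wtshift (t.1.2, t.2.1, t.2.2.2)
  wtpop t := W₁.wtpop (t.1.1, t.2.1.1, t.2.2.1) * W₂.wtpop (t.1.2, t.2.1.2, t.2.2.2)

section Weights

variable {M : OPM A} {W₁ W₂ : WOPA A K}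

lemma Restricted.prod [Semiring K] (h₁ : Restricted W₁) (h₂ : Restricted W₂) :
    Restricted (W₁.prod W₂) := by
  rintro ⟨q, p, r⟩ ⟨hp₁, hp₂⟩
  exact (congrArg₂ (· * ·) (h₁ _ hp₁) (h₂ _ hp₂)).trans (mul_one 1)

lemma moveWt_prod [Semiring K] (m : Move A (W₁.Q × W₂.Q)) :
    moveWt (W₁.prod W₂) m = moveWt W₁ (m.map Prod.fst) * moveWt W₂ (m.map Prod.snd) := by
  cases m <;> rfl

lemma behavior_prod [CommSemiring K] [Finite A] (w : List A) :
    behavior M (W₁.prod W₂) w = behavior M W₁ w * behavior M W₂ w := by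
  rw [behavior, behavior, behavior,
    ← finsum_mem_prod_mul_prod (accRuns_finite _ w) (accRuns_finite _ w)]
  exact finsum_mem_eq_of_bijOn _ (accRuns_prod_bijOn _ _ w) fun ρ _ => by
    rw [List.map_map, List.map_map, ← List.prod_map_mul]
    exact congrArg List.prod (List.map_congr_left fun m _ => moveWt_prod m)

end Weights

theorem Regular.mul [CommSemiring K] [Finite A] {M : OPM A} {S T : List A → K}
    (hS : Regular M S) (hT : Regular M T) : Regular M (fun w => S w * T w) := by
  obtain ⟨W₁, h₁⟩ := hS
  obtain ⟨W₂, h₂⟩ := hT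
  exact ⟨W₁.prod W₂, fun w hw => by rw [behavior_prod, ← h₁ w hw, ← h₂ w hw]⟩

theorem StrictlyRegular.mul [CommSemiring K] [Finite A] {M : OPM A} {S T : List A → K}
    (hS : StrictlyRegular M S) (hT : StrictlyRegular M T) :
    StrictlyRegular M (fun w => S w * T w) := by
  obtain ⟨W₁, hr₁, h₁⟩ := hS
  obtain ⟨W₂, hr₂, h₂⟩ := hT
  exact ⟨W₁.prod W₂, hr₁.prod hr₂, fun w hw => by rw [behavior_prod, ← h₁ w hw, ← h₂ w hw]⟩

/-- Over a commutative semiring, the pointwise (Hadamard) product of two regular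
(resp. strictly regular) series is regular (resp. strictly regular). -/
theorem hadamard_regular {A K : Type} [Fintype A] [CommSemiring K] (M : OPM A)
    (S T : List A → K) :
    (Regular M S → Regular M T → Regular M (fun w => S w * T w)) ∧
    (StrictlyRegular M S → StrictlyRegular M T →
      StrictlyRegular M (fun w => S w * T w)) :=
  ⟨Regular.mul, StrictlyRegular.mul⟩

end WOP
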